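/- Fix q₀ > 0 and let Ĩ^(n)(ξ) = det( Ĩ_{i+k}(ξ) )_{i,k=0}^{n-1} with Ĩ_m(ξ) = ∫_{q₀ξ}^∞ s^m e^{-2s} ds. Then Ĩ^(n) satisfies the differential equation d/dξ Ĩ^(n)(ξ) + 2n q₀ Ĩ^(n)(ξ) = 0, and hence Ĩ^(n)(ξ) = Ĩ^(n)(0) e^{-2n q₀ ξ} for all ξ ∈ ℝ. -/
import Mathlib

open MeasureTheory
open scoped Matrix

/-- Ĩ_m(ξ) = ∫_{q₀ξ}^∞ s^m e^{-2s} ds. -/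
noncomputable def Itil (q₀ : ℝ) (m : ℕ) (ξ : ℝ) : ℝ :=
  ∫ s in Set.Ici (q₀ * ξ), s^m * Real.exp (-2*s)

/-- Ĩ⁽ⁿ⁾(ξ) = det( Ĩ_{i+k}(ξ) ). -/
noncomputable def ItilDet (q₀ : ℝ) (n : ℕ) (ξ : ℝ) : ℝ :=
  (Matrix.of fun i k : Fin n => Itil q₀ ((i : ℕ) + (k : ℕ)) ξ).det

/-- moment integral c_j -/
noncomputable def cInt (j : ℕ) : ℝ := ∫ t in Set.Ici (0:ℝ), t^j * Real.exp (-2*t)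

lemma integ (m : ℕ) (a : ℝ) :
    IntegrableOn (fun s : ℝ => s^m * Real.exp (-2*s)) (Set.Ici a) := by
  rw [integrableOn_Ici_iff_integrableOn_Ioi]
  apply integrable_of_isBigO_exp_neg (b := 1) one_pos
  · exact (Continuous.continuousOn (by fun_prop))
  · have h := Real.tendsto_pow_mul_exp_neg_atTop_nhds_zero m
    have h2 : ∀ᶠ x : ℝ in Filter.atTop, |x| ^ m * Real.exp (-x) ≤ 1 := by
      filter_upwards [h.eventually (Metric.ball_mem_nhds 0 one_pos)] with x hx
      exact le_of_lt (by simpa [Real.dist_eq] using hx)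
    refine Asymptotics.IsBigO.of_bound 1 ?_
    filter_upwards [h2] with x hx
    have he : Real.exp (-2*x) = Real.exp (-x) * Real.exp (-x) := by
      rw [← Real.exp_add]; ring_nf
    have : |x ^ m * Real.exp (-2*x)| = |x| ^ m * Real.exp (-x) * Real.exp (-x) := by
      rw [he, ← mul_assoc, abs_mul, abs_mul, abs_pow, Real.abs_exp]
    rw [Real.norm_eq_abs, Real.norm_eq_abs, Real.abs_exp, this, one_mul, neg_one_mul]
    have := Real.exp_pos (-x)
    nlinarith [pow_nonneg (abs_nonneg x) m]

lemma Itil_shift (q₀ : ℝ) (m : ℕ) (ξ : ℝ) :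
    Itil q₀ m ξ
      = Real.exp (-2*(q₀*ξ)) * ∫ t in Set.Ici (0:ℝ), (t + q₀*ξ)^m * Real.exp (-2*t) := by
  unfold Itil
  rw [← (measurePreserving_add_right volume (q₀*ξ)).setIntegral_preimage_emb
      (measurableEmbedding_addRight (q₀*ξ))]
  rw [show ((· + q₀*ξ) ⁻¹' Set.Ici (q₀*ξ)) = Set.Ici (0:ℝ) from by ext x; simp]
  rw [← integral_const_mul]
  refine setIntegral_congr_fun measurableSet_Ici fun t _ => ?_
  have : Real.exp (-2*(t + q₀*ξ)) = Real.exp (-2*(q₀*ξ)) * Real.exp (-2*t) := by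
    rw [← Real.exp_add]; ring_nf
  rw [this]; ring

lemma key (x : ℝ) (i k : ℕ) :
    ∫ t in Set.Ici (0:ℝ), (t + x)^(i+k) * Real.exp (-2*t)
      = ∑ a ∈ Finset.range (i+1), ∑ b ∈ Finset.range (k+1),
          ((i.choose a : ℝ) * (k.choose b) * x^(i-a) * x^(k-b)) * cInt (a+b) := by
  have hint : ∀ t : ℝ, (t + x)^(i+k) * Real.exp (-2*t)
      = ∑ a ∈ Finset.range (i+1), ∑ b ∈ Finset.range (k+1),
          ((i.choose a : ℝ) * (k.choose b) * x^(i-a) * x^(k-b)) * (t^(a+b) * Real.exp (-2*t)) := by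
    intro t
    rw [pow_add, add_pow, add_pow, Finset.sum_mul_sum, Finset.sum_mul]
    refine Finset.sum_congr rfl fun a _ => ?_
    rw [Finset.sum_mul]
    refine Finset.sum_congr rfl fun b _ => ?_
    rw [pow_add]; ring
  simp_rw [hint]
  rw [integral_finset_sum]
  · refine Finset.sum_congr rfl fun a _ => ?_
    rw [integral_finset_sum]
    · exact Finset.sum_congr rfl fun b _ => integral_const_mul _ _
    · intro b _; exact (integ (a+b) 0).const_mul _
  · intro a _
    exact integrable_finset_sum _ fun b _ => (integ (a+b) 0).const_mul _

lemma shrink {n i : ℕ} (hi : i < n) (f : ℕ → ℝ)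
    (hf : ∀ a, i < a → f a = 0) :
    ∑ a ∈ Finset.range n, f a = ∑ a ∈ Finset.range (i+1), f a := by
  symm
  refine Finset.sum_subset (Finset.range_subset_range.2 hi) fun a _ ha => ?_
  exact hf a (by simp [Finset.mem_range] at ha; omega)

lemma entry (x : ℝ) {n i k : ℕ} (hi : i < n) (hk : k < n) :
    (∑ b ∈ Finset.range n, ∑ a ∈ Finset.range n,
        ((i.choose a : ℝ) * x^(i-a)) * cInt (a+b) * ((k.choose b : ℝ) * x^(k-b)))
      = ∑ a ∈ Finset.range (i+1), ∑ b ∈ Finset.range (k+1),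
          ((i.choose a : ℝ) * (k.choose b) * x^(i-a) * x^(k-b)) * cInt (a+b) := by
  rw [shrink hk (fun b => ∑ a ∈ Finset.range n,
      ((i.choose a : ℝ) * x^(i-a)) * cInt (a+b) * ((k.choose b : ℝ) * x^(k-b)))
      (fun b hb => Finset.sum_eq_zero fun a _ => by
        simp [Nat.choose_eq_zero_of_lt hb])]
  rw [Finset.sum_congr rfl (fun b _ => shrink hi
      (fun a => ((i.choose a : ℝ) * x^(i-a)) * cInt (a+b) * ((k.choose b : ℝ) * x^(k-b)))
      (fun a ha => by simp [Nat.choose_eq_zero_of_lt ha]))]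
  rw [Finset.sum_comm]
  exact Finset.sum_congr rfl fun a _ => Finset.sum_congr rfl fun b _ => by ring

lemma ItilDet_eq (q₀ : ℝ) (n : ℕ) (ξ : ℝ) :
    ItilDet q₀ n ξ = Real.exp (-2*(q₀*ξ))^n *
      (Matrix.of fun a b : Fin n => cInt ((a:ℕ)+(b:ℕ))).det := by
  set x := q₀ * ξ with hxdef
  set T : Matrix (Fin n) (Fin n) ℝ :=
    Matrix.of (fun i a : Fin n => (((i:ℕ).choose a : ℕ) : ℝ) * x^((i:ℕ)-(a:ℕ))) with hT
  set C : Matrix (Fin n) (Fin n) ℝ := Matrix.of (fun a b : Fin n => cInt ((a:ℕ)+(b:ℕ))) with hC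
  have hsum : ∀ (g : ℕ → ℕ → ℝ), (∑ b : Fin n, ∑ a : Fin n, g a b)
      = ∑ b ∈ Finset.range n, ∑ a ∈ Finset.range n, g a b := by
    intro g
    rw [Fin.sum_univ_eq_sum_range (fun b => ∑ a : Fin n, g a b)]
    exact Finset.sum_congr rfl fun b _ => Fin.sum_univ_eq_sum_range (fun a => g a b) n
  have hM : (Matrix.of fun i k : Fin n => Itil q₀ ((i:ℕ)+(k:ℕ)) ξ)
      = Real.exp (-2*x) • (T * C * Tᵀ) := by
    ext i k
    rw [Matrix.smul_apply, Matrix.of_apply, Itil_shift, key]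
    have h1 : (T * C * Tᵀ) i k = ∑ b : Fin n, ∑ a : Fin n,
        ((((i:ℕ).choose a : ℕ) : ℝ) * x^((i:ℕ)-(a:ℕ))) * cInt ((a:ℕ)+(b:ℕ))
          * ((((k:ℕ).choose b : ℕ) : ℝ) * x^((k:ℕ)-(b:ℕ))) := by
      simp [Matrix.mul_apply, Finset.sum_mul, hT, hC]
    rw [h1, hsum (fun a b => (((i:ℕ).choose a : ℝ) * x^((i:ℕ)-a)) * cInt (a+b)
        * (((k:ℕ).choose b : ℝ) * x^((k:ℕ)-b))),
      entry x i.isLt k.isLt, smul_eq_mul]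
  have hTdet : T.det = 1 := by
    rw [Matrix.det_of_lowerTriangular T (fun i j hij => by
      rw [hT, Matrix.of_apply, Nat.choose_eq_zero_of_lt (by exact_mod_cast hij)]
      push_cast; ring)]
    simp [hT]
  unfold ItilDet
  rw [hM, Matrix.det_smul, Matrix.det_mul, Matrix.det_mul, Matrix.det_transpose, hTdet]
  simp [hC]

lemma ItilDet_zero (q₀ : ℝ) (n : ℕ) :
    ItilDet q₀ n 0 = (Matrix.of fun a b : Fin n => cInt ((a:ℕ)+(b:ℕ))).det := by
  unfold ItilDet
  congr 1
  ext a b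
  simp [Itil, cInt]

theorem stmt13 (q₀ : ℝ) (hq₀ : 0 < q₀) (n : ℕ) :
    (∀ ξ : ℝ, deriv (ItilDet q₀ n) ξ + 2*(n : ℝ)*q₀ * ItilDet q₀ n ξ = 0) ∧
    (∀ ξ : ℝ, ItilDet q₀ n ξ = ItilDet q₀ n 0 * Real.exp (-2*(n : ℝ)*q₀*ξ)) := by
  have L : ∀ ξ : ℝ, ItilDet q₀ n ξ = ItilDet q₀ n 0 * Real.exp (-2*(n : ℝ)*q₀*ξ) := by
    intro ξ
    rw [ItilDet_eq, ItilDet_zero, ← Real.exp_nat_mul, mul_comm]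
    congr 1
    ring
  refine ⟨fun ξ => ?_, L⟩
  have hfun : ItilDet q₀ n = fun ξ => ItilDet q₀ n 0 * Real.exp (-2*(n : ℝ)*q₀*ξ) := funext L
  have h1 : HasDerivAt (fun ξ : ℝ => -2*(n : ℝ)*q₀*ξ) (-2*(n : ℝ)*q₀) ξ := by
    simpa using (hasDerivAt_id ξ).const_mul (-2*(n : ℝ)*q₀)
  have h2 := (h1.exp.const_mul (ItilDet q₀ n 0)).deriv
  rw [hfun, h2]
  ring
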